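/- Let p be a prime, r ≥ 1, and a_1 ≥ a_2 ≥ ⋯ ≥ a_r ≥ 1 integers. Then the integer E(p^{a_1}, p^{a_2}, …, p^{a_r}) is odd if and only if p = 2, a_1 = 1 (i.e., all a_j = 1), and r is even. -/

import Mathlib

/-- The von Sterneck function `Φ(k,n) = μ(n/gcd(k,n)) * φ(n) / φ(n/gcd(k,n))`. -/
noncomputable def vonSterneck (k n : ℕ) : ℚ :=
  (ArithmeticFunction.moebius (n / Nat.gcd k n) : ℚ) * (Nat.totient n : ℚ) /
    (Nat.totient (n / Nat.gcd k n) : ℚ)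

/-- The orbicyclic function `E(m_1,…,m_r)`. -/
noncomputable def orbE {r : ℕ} (m : Fin r → ℕ) : ℚ :=
  (∑ k ∈ Finset.Icc 1 (Finset.univ.lcm m), ∏ j, vonSterneck k (m j)) /
    ((Finset.univ.lcm m : ℕ) : ℚ)

/-- The polynomial `h_s(x) = ((x-1)^(s-1) + (-1)^s)/x`. -/
noncomputable def hpoly (s : ℕ) (x : ℚ) : ℚ := ((x - 1) ^ (s - 1) + (-1) ^ s) / x

/-!
Let `b + 1` be the largest exponent and `s` the number of exponents equal to it. For
`1 ≤ k ≤ p ^ (b + 1)`, `Φ(k, p ^ (b + 1))` is `φ(p ^ (b + 1))` when `p ^ (b + 1) ∣ k`, `-p ^ b`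
when `p ^ b` divides `k` exactly, and `0` otherwise, while every smaller exponent contributes
`φ(p ^ a_j)` whenever the product is nonzero. Summing over `k` gives
`E = (p - 1) p ^ (b (s - 1)) ∏_{a_j ≤ b} φ(p ^ a_j) h_s(p)`, where `h_s(p)` is an integer because
`p - 1 ≡ -1 [ZMOD p]`. For odd `p` the factor `p - 1` is even. For `p = 2`, `h_s(2)` is `1` or `0`
according to the parity of `s`, so `E` is odd only if `b = 0`; then all exponents are `1`, `s = r`
and `E = h_r(2)`.
-/

open Finset

section

variable {p : ℕ}

lemma vonSterneck_of_dvd {k n : ℕ} (h : n ∣ k) : vonSterneck k n = n.totient := by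
  rcases n.eq_zero_or_pos with rfl | hn
  · simp [vonSterneck]
  · simp [vonSterneck, Nat.gcd_eq_right h, Nat.div_self hn]

lemma vonSterneck_prime_pow_succ_eq_zero (hp : p.Prime) {b k : ℕ} (h : ¬ p ^ b ∣ k) :
    vonSterneck k (p ^ (b + 1)) = 0 := by
  obtain ⟨c, hc, hgcd⟩ := (Nat.dvd_prime_pow hp).mp (Nat.gcd_dvd_right k (p ^ (b + 1)))
  have hcb : c < b := by
    by_contra! hbc
    exact h ((pow_dvd_pow p hbc).trans (hgcd ▸ Nat.gcd_dvd_left k _))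
  have : ¬ Squarefree (p ^ (b + 1 - c)) := by
    rw [Nat.squarefree_pow_iff hp.ne_one (by omega)]
    omega
  simp [vonSterneck, hgcd, Nat.pow_div hc hp.pos,
    ArithmeticFunction.moebius_eq_zero_of_not_squarefree this]

lemma vonSterneck_prime_pow_succ_of_dvd_of_not_dvd (hp : p.Prime) {b k : ℕ} (h : p ^ b ∣ k)
    (h' : ¬ p ^ (b + 1) ∣ k) : vonSterneck k (p ^ (b + 1)) = -(p : ℚ) ^ b := by
  have hgcd : Nat.gcd k (p ^ (b + 1)) = p ^ b := by
    obtain ⟨c, hc, hgcd⟩ := (Nat.dvd_prime_pow hp).mp (Nat.gcd_dvd_right k (p ^ (b + 1)))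
    have hbc : b ≤ c := (Nat.pow_dvd_pow_iff_le_right hp.one_lt).mp
      (hgcd ▸ Nat.dvd_gcd h (pow_dvd_pow p b.le_succ))
    have hcb : c ≠ b + 1 := by
      rintro rfl
      exact h' (hgcd ▸ Nat.gcd_dvd_left _ _)
    rw [hgcd, show c = b by omega]
  have hp1 : (p : ℚ) - 1 ≠ 0 := sub_ne_zero.2 (by exact_mod_cast hp.ne_one)
  simp [vonSterneck, hgcd, Nat.pow_div b.le_succ hp.pos, ArithmeticFunction.moebius_apply_prime hp,
    Nat.totient_prime_pow_succ hp, Nat.totient_prime hp, Nat.cast_sub hp.one_le]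
  field_simp

lemma sum_vonSterneck_prime_pow_succ_pow (hp : p.Prime) (b : ℕ) {s : ℕ} (hs : s ≠ 0) :
    ∑ k ∈ Icc 1 (p ^ (b + 1)), vonSterneck k (p ^ (b + 1)) ^ s =
      p ^ (b + 1) * ((p - 1) * p ^ (b * (s - 1)) * hpoly s p) := by
  -- Indicators of divisibility, so that summing reduces to counting multiples.
  have hpoint : ∀ k, vonSterneck k (p ^ (b + 1)) ^ s =
      (if p ^ b ∣ k then (-(p : ℚ) ^ b) ^ s else 0) +
      (if p ^ (b + 1) ∣ k then (((p : ℚ) - 1) * p ^ b) ^ s - (-(p : ℚ) ^ b) ^ s else 0) := by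
    intro k
    by_cases hk' : p ^ (b + 1) ∣ k
    · have hk : p ^ b ∣ k := (pow_dvd_pow p b.le_succ).trans hk'
      simp [hk, hk', vonSterneck_of_dvd hk', Nat.totient_prime_pow_succ hp, Nat.cast_sub hp.one_le]
      ring
    by_cases hk : p ^ b ∣ k
    · simp [hk, hk', vonSterneck_prime_pow_succ_of_dvd_of_not_dvd hp hk hk']
    · simp [hk, hk', vonSterneck_prime_pow_succ_eq_zero hp hk, hs]
  rw [show Icc 1 (p ^ (b + 1)) = Ioc 0 (p ^ (b + 1)) from Icc_add_one_left_eq_Ioc 0 _]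
  simp only [hpoint, sum_add_distrib, ← sum_filter, sum_const, Nat.Ioc_filter_dvd_card_eq_div,
    nsmul_eq_mul]
  rw [Nat.pow_div (Nat.le_add_right b 1) hp.pos, Nat.add_sub_cancel_left,
    Nat.div_self (pow_pos hp.pos _)]
  obtain ⟨t, rfl⟩ := Nat.exists_eq_add_of_le' (Nat.one_le_iff_ne_zero.2 hs)
  have hp0 : (p : ℚ) ≠ 0 := by exact_mod_cast hp.ne_zero
  rw [hpoly, Nat.add_sub_cancel, mul_pow, neg_pow, ← pow_mul, mul_add, mul_one, pow_add]
  push_cast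
  field_simp
  ring

lemma prod_vonSterneck_prime_pow {ι : Type*} [Fintype ι] (hp : p.Prime) {a : ι → ℕ} {b : ℕ}
    (ha : ∀ j, a j ≤ b + 1) (hb : ∃ j, a j = b + 1) (k : ℕ) :
    ∏ j, vonSterneck k (p ^ a j) = vonSterneck k (p ^ (b + 1)) ^ #{j | a j = b + 1} *
      ((∏ j with a j ≠ b + 1, (p ^ a j).totient : ℕ) : ℚ) := by
  rw [← prod_filter_mul_prod_filter_not univ (fun j => a j = b + 1),
    prod_congr rfl fun j hj => by rw [(mem_filter.1 hj).2], prod_const, Nat.cast_prod]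
  by_cases hk : p ^ b ∣ k
  · refine congrArg _ (prod_congr rfl fun j hj => vonSterneck_of_dvd ((pow_dvd_pow p ?_).trans hk))
    have := ha j
    have := (mem_filter.1 hj).2
    omega
  · obtain ⟨j, hj⟩ := hb
    rw [vonSterneck_prime_pow_succ_eq_zero hp hk, zero_pow (card_ne_zero.2 ⟨j, by simp [hj]⟩)]
    simp

end

lemma hpoly_two (s : ℕ) : hpoly s 2 = if Even s then 1 else 0 := by
  split_ifs with hs
  · norm_num [hpoly, hs.neg_one_pow]
  · norm_num [hpoly, (Nat.not_even_iff_odd.1 hs).neg_one_pow]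

lemma exists_hpoly_natCast_eq_intCast {p : ℕ} (hp : p ≠ 0) {s : ℕ} (hs : s ≠ 0) :
    ∃ N : ℤ, hpoly s p = N := by
  obtain ⟨t, rfl⟩ := Nat.exists_eq_add_of_le' (Nat.one_le_iff_ne_zero.2 hs)
  obtain ⟨N, hN⟩ := sub_dvd_pow_sub_pow ((p : ℤ) - 1) (-1) t
  refine ⟨N, ?_⟩
  have hp0 : (p : ℚ) ≠ 0 := by exact_mod_cast hp
  rw [hpoly, Nat.add_sub_cancel, div_eq_iff hp0]
  have := congrArg (fun z : ℤ => (z : ℚ)) hN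
  push_cast at this
  linear_combination this

lemma Rat.not_odd_num_of_eq_two_mul {q : ℚ} {n : ℤ} (h : q = 2 * n) : ¬ Odd q.num := by
  rw [h, show (2 * n : ℚ) = ((2 * n : ℤ) : ℚ) by push_cast; rfl, Rat.num_intCast]
  exact Int.not_odd_iff_even.2 (even_two_mul n)

section

variable {p r b : ℕ} {a : Fin r → ℕ}

lemma orbE_prime_pow (hp : p.Prime) (ha : ∀ j, a j ≤ b + 1) (hb : ∃ j, a j = b + 1) :
    orbE (fun j => p ^ a j) = (p - 1) * p ^ (b * (#{j | a j = b + 1} - 1)) *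
      ((∏ j with a j ≠ b + 1, (p ^ a j).totient : ℕ) : ℚ) * hpoly #{j | a j = b + 1} p := by
  have hlcm : univ.lcm (fun j => p ^ a j) = p ^ (b + 1) := by
    obtain ⟨j, hj⟩ := hb
    exact Nat.dvd_antisymm (Finset.lcm_dvd fun j _ => pow_dvd_pow p (ha j))
      (hj ▸ Finset.dvd_lcm (mem_univ j))
  have hs : #{j | a j = b + 1} ≠ 0 := by
    obtain ⟨j, hj⟩ := hb
    exact card_ne_zero.2 ⟨j, by simp [hj]⟩
  have hp0 : ((p ^ (b + 1) : ℕ) : ℚ) ≠ 0 := by exact_mod_cast (pow_pos hp.pos _).ne'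
  rw [orbE, hlcm, sum_congr rfl fun k _ => prod_vonSterneck_prime_pow hp ha hb k, ← sum_mul,
    sum_vonSterneck_prime_pow_succ_pow hp b hs]
  field_simp
  push_cast
  ring

lemma exists_orbE_prime_pow_eq_two_mul_of_ne_two (hp : p.Prime) (hp2 : p ≠ 2)
    (ha : ∀ j, a j ≤ b + 1) (hb : ∃ j, a j = b + 1) :
    ∃ n : ℤ, orbE (fun j => p ^ a j) = 2 * n := by
  obtain ⟨m, hm⟩ := hp.odd_of_ne_two hp2
  obtain ⟨j, hj⟩ := hb
  obtain ⟨N, hN⟩ := exists_hpoly_natCast_eq_intCast hp.ne_zero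
    (card_ne_zero.2 ⟨j, by simp [hj]⟩ : #{j | a j = b + 1} ≠ 0)
  refine ⟨m * p ^ (b * (#{j | a j = b + 1} - 1)) *
    (∏ j with a j ≠ b + 1, (p ^ a j).totient : ℕ) * N, ?_⟩
  rw [orbE_prime_pow hp ha ⟨j, hj⟩, hN, hm]
  push_cast
  ring

lemma exists_orbE_two_pow_eq_two_mul (hb0 : b ≠ 0) (ha : ∀ j, a j ≤ b + 1)
    (hb : ∃ j, a j = b + 1) : ∃ n : ℤ, orbE (fun j => 2 ^ a j) = 2 * n := by
  rw [orbE_prime_pow Nat.prime_two ha hb, Nat.cast_ofNat, hpoly_two]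
  split_ifs with hs
  · obtain ⟨j, hj⟩ := hb
    have hs0 : #{j | a j = b + 1} ≠ 0 := card_ne_zero.2 ⟨j, by simp [hj]⟩
    obtain ⟨e, he⟩ : ∃ e, b * (#{j | a j = b + 1} - 1) = e + 1 :=
      Nat.exists_eq_add_of_le' (Nat.one_le_iff_ne_zero.2
        (mul_ne_zero hb0 (by obtain ⟨k, hk⟩ := hs; omega)))
    refine ⟨2 ^ e * (∏ j with a j ≠ b + 1, (2 ^ a j).totient : ℕ), ?_⟩
    rw [he]
    push_cast
    ring
  · exact ⟨0, by simp⟩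

end

theorem orbE_prime_pow_odd_iff (p r : ℕ) (hp : p.Prime) (hr : 1 ≤ r)
    (a : Fin r → ℕ) (ha : ∀ j, 1 ≤ a j) (hmono : Antitone a) :
    Odd (orbE (fun j => p ^ a j)).num ↔ (p = 2 ∧ a ⟨0, hr⟩ = 1 ∧ Even r) := by
  obtain ⟨b, hb⟩ : ∃ b, a ⟨0, hr⟩ = b + 1 := Nat.exists_eq_add_of_le' (ha _)
  have hle : ∀ j, a j ≤ b + 1 := fun j => hb ▸ hmono (Nat.zero_le _)
  rcases eq_or_ne p 2 with rfl | hp2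
  · rcases eq_or_ne b 0 with rfl | hb0
    · have hall : ∀ j, a j = 0 + 1 := fun j => le_antisymm (hle j) (ha j)
      have hE : orbE (fun j => 2 ^ a j) = if Even r then 1 else 0 := by
        rw [orbE_prime_pow hp hle ⟨_, hb⟩]
        norm_num [hall, hpoly_two]
      rw [hE]
      split_ifs with hr2 <;> simp [hall, hr2]
    · obtain ⟨n, hn⟩ := exists_orbE_two_pow_eq_two_mul hb0 hle ⟨_, hb⟩
      exact iff_of_false (Rat.not_odd_num_of_eq_two_mul hn) (by omega)
  · obtain ⟨n, hn⟩ := exists_orbE_prime_pow_eq_two_mul_of_ne_two hp hp2 hle ⟨_, hb⟩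
    exact iff_of_false (Rat.not_odd_num_of_eq_two_mul hn) fun h => hp2 h.1
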